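/- Let ρ be a Borel probability measure on ℝ, let X ⊂ ℝ be a bounded interval of positive length, and suppose E_ρ(X) = c·I for some scalar c, where E_ρ(X) is multiplication by the function q ↦ ρ(X − q) on L²(ℝ). Then c = 0 and the function q ↦ ρ(X − q) is zero almost everywhere; this contradicts ρ(ℝ) = 1, hence E_ρ(X) is never a scalar multiple of the identity. -/
import Mathlib


open MeasureTheory
open scoped ENNReal

/-- Let `ρ` be a Borel probability measure on `ℝ` and `X = [a,b]` a bounded interval
of positive length.  The operator `E_ρ(X)`, i.e. multiplication by `q ↦ ρ(X − q)` on
`L²(ℝ)`, is never a scalar multiple of the identity: there is no constant `c` with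
`ρ(X − q) = c` for almost every `q`.  (Here `X − q = {x − q : x ∈ X} = (· + q)⁻¹ X`.) -/
theorem stmt3 (ρ : Measure ℝ) [IsProbabilityMeasure ρ] (a b : ℝ) (hab : a < b) :
    ¬ ∃ c : ℝ,
      (fun q : ℝ => (ρ ((· + q) ⁻¹' Set.Icc a b)).toReal) =ᵐ[volume] (fun _ => c) := by
  rintro ⟨c, hc⟩
  -- Tonelli computation of the integral of q ↦ ρ((· + q) ⁻¹' Icc a b)
  have hmeas : Measurable (Function.uncurry fun (q x : ℝ) =>
      Set.indicator (Set.Icc a b) (fun _ => (1 : ℝ≥0∞)) (x + q)) := by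
    apply Measurable.indicator measurable_const
    have : Function.uncurry (fun (q x : ℝ) => x + q) ⁻¹' Set.Icc a b
        = {p : ℝ × ℝ | p.2 + p.1 ∈ Set.Icc a b} := rfl
    exact (measurable_snd.add measurable_fst) measurableSet_Icc
  have key : (∫⁻ q, ρ ((· + q) ⁻¹' Set.Icc a b) ∂volume) = ENNReal.ofReal (b - a) := by
    have h1 : ∀ q : ℝ, ρ ((· + q) ⁻¹' Set.Icc a b)
        = ∫⁻ x, Set.indicator (Set.Icc a b) (fun _ => (1 : ℝ≥0∞)) (x + q) ∂ρ := by
      intro q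
      have : (fun x => Set.indicator (Set.Icc a b) (fun _ => (1 : ℝ≥0∞)) (x + q))
          = Set.indicator ((· + q) ⁻¹' Set.Icc a b) (fun _ => (1 : ℝ≥0∞)) := rfl
      rw [this, lintegral_indicator (measurableSet_Icc.preimage (measurable_add_const q))]
      simp
    calc (∫⁻ q, ρ ((· + q) ⁻¹' Set.Icc a b) ∂volume)
        = ∫⁻ q, ∫⁻ x, Set.indicator (Set.Icc a b) (fun _ => (1 : ℝ≥0∞)) (x + q) ∂ρ ∂volume := by
          simp_rw [h1]
      _ = ∫⁻ x, ∫⁻ q, Set.indicator (Set.Icc a b) (fun _ => (1 : ℝ≥0∞)) (x + q) ∂volume ∂ρ :=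
          lintegral_lintegral_swap hmeas.aemeasurable
      _ = ∫⁻ x : ℝ, ENNReal.ofReal (b - a) ∂ρ := by
          refine lintegral_congr fun x => ?_
          have hset : ∀ q : ℝ, Set.indicator (Set.Icc a b) (fun _ => (1 : ℝ≥0∞)) (x + q)
              = Set.indicator (Set.Icc (a - x) (b - x)) (fun _ => (1 : ℝ≥0∞)) q := by
            intro q
            simp only [Set.indicator_apply, Set.mem_Icc]
            congr 1
            simp only [eq_iff_iff]
            constructor <;> rintro ⟨h1, h2⟩ <;> constructor <;> linarith
          simp_rw [hset]
          rw [lintegral_indicator measurableSet_Icc]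
          simp [Real.volume_Icc]
      _ = ENNReal.ofReal (b - a) := by simp
  -- replace the integrand by the constant c
  have h2 : (∫⁻ q, ρ ((· + q) ⁻¹' Set.Icc a b) ∂volume)
      = ∫⁻ _ : ℝ, ENNReal.ofReal c ∂volume := by
    refine lintegral_congr_ae (hc.mono fun q hq => ?_)
    simp only at hq
    rw [← hq, ENNReal.ofReal_toReal (measure_ne_top ρ _)]
  rw [key, lintegral_const] at h2
  rcases eq_or_ne (ENNReal.ofReal c) 0 with h0 | h0
  · rw [h0, zero_mul] at h2
    simp only [ENNReal.ofReal_eq_zero] at h2; linarith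
  · rw [ENNReal.mul_eq_top.mpr (Or.inl ⟨h0, by simp⟩)] at h2
    exact absurd h2 (by simp)
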